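/- arXiv:2605.00332 — 2 statements merged into one kernel-verified Lean document; each statement's English description precedes it below -/
import Mathlib

section
/- Let Γ_p be an n1×n1 symmetric positive definite matrix with Γ_p = (L_pᵀ L_p)⁻¹ for an invertible matrix L_p, let Γ_m be an n2×n2 symmetric positive definite matrix with Γ_m = (L_mᵀ L_m)⁻¹ for an invertible matrix L_m, and let C be an n1×n2 matrix with operator norm strictly less than 1. Then the block matrix Γ = [[Γ_p, L_p⁻¹ C L_m⁻ᵀ],[L_m⁻¹ Cᵀ L_p⁻ᵀ, Γ_m]] is symmetric positive definite. -/
/-!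
Writing `D = diag(Lp⁻¹, Lm⁻¹)` and `K = [[1, C], [Cᵀ, 1]]`, the block matrix is `D K Dᵀ`, since
`(Lᵀ L)⁻¹ = L⁻¹ L⁻ᵀ`. Congruence by the invertible `D` preserves positive definiteness, and `K`
is positive definite because for `x = (u, v) ≠ 0`, by Cauchy–Schwarz,
`xᵀ K x = ‖u‖² + ‖v‖² + 2 uᵀ C v ≥ (1 - ‖C‖)(‖u‖² + ‖v‖²) + ‖C‖ (‖u‖ - ‖v‖)² > 0`.
-/

open Matrix

/-- The operator (spectral) norm of a real matrix. -/
noncomputable def opNorm {m n : ℕ} (C : Matrix (Fin m) (Fin n) ℝ) : ℝ :=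
  ‖LinearMap.toContinuousLinearMap (Matrix.toEuclideanLin C)‖

lemma abs_dotProduct_mulVec_le_opNorm {m n : ℕ} (C : Matrix (Fin m) (Fin n) ℝ)
    (u : Fin m → ℝ) (v : Fin n → ℝ) :
    |u ⬝ᵥ C *ᵥ v| ≤ opNorm C * ‖WithLp.toLp 2 u‖ * ‖WithLp.toLp 2 v‖ := by
  have hinner :
      u ⬝ᵥ C *ᵥ v = inner ℝ (WithLp.toLp 2 u) (toEuclideanLin C (WithLp.toLp 2 v)) := by
    rw [dotProduct_comm]; rfl
  calc |u ⬝ᵥ C *ᵥ v| ≤ ‖WithLp.toLp 2 u‖ * ‖toEuclideanLin C (WithLp.toLp 2 v)‖ :=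
        hinner ▸ abs_real_inner_le_norm _ _
    _ ≤ ‖WithLp.toLp 2 u‖ * (opNorm C * ‖WithLp.toLp 2 v‖) := by
        gcongr
        exact (LinearMap.toContinuousLinearMap (toEuclideanLin C)).le_opNorm _
    _ = opNorm C * ‖WithLp.toLp 2 u‖ * ‖WithLp.toLp 2 v‖ := by ring

lemma dotProduct_self_eq_norm_toLp_sq {n : Type*} [Fintype n] (u : n → ℝ) :
    u ⬝ᵥ u = ‖WithLp.toLp 2 u‖ ^ 2 := by
  rw [← real_inner_self_eq_norm_sq]; rfl

lemma dotProduct_fromBlocks_one_mulVec {R m n : Type*} [CommRing R] [Fintype m] [Fintype n]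
    [DecidableEq m] [DecidableEq n] (C : Matrix m n R) (u : m → R) (v : n → R) :
    Sum.elim u v ⬝ᵥ fromBlocks 1 C Cᵀ 1 *ᵥ Sum.elim u v
      = u ⬝ᵥ u + v ⬝ᵥ v + 2 * (u ⬝ᵥ C *ᵥ v) := by
  rw [fromBlocks_mulVec, dotProduct_block]
  simp only [Sum.elim_comp_inl, Sum.elim_comp_inr, one_mulVec, dotProduct_add]
  rw [mulVec_transpose, dotProduct_comm v, ← dotProduct_mulVec]
  ring

lemma posDef_fromBlocks_one_of_opNorm_lt_one {m n : ℕ} (C : Matrix (Fin m) (Fin n) ℝ)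
    (hC : opNorm C < 1) : (fromBlocks 1 C Cᵀ 1).PosDef := by
  refine .of_dotProduct_mulVec_pos ?_ fun x hx => ?_
  · exact isHermitian_one.fromBlocks (conjTranspose_eq_transpose_of_trivial C) isHermitian_one
  obtain ⟨u, v, rfl⟩ : ∃ u v, x = Sum.elim u v := ⟨_, _, (Sum.elim_comp_inl_inr x).symm⟩
  have huv : WithLp.toLp 2 u ≠ 0 ∨ WithLp.toLp 2 v ≠ 0 := by
    by_contra! h
    simp_all
  rw [star_trivial, dotProduct_fromBlocks_one_mulVec, dotProduct_self_eq_norm_toLp_sq,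
    dotProduct_self_eq_norm_toLp_sq]
  have hsum : 0 < ‖WithLp.toLp 2 u‖ ^ 2 + ‖WithLp.toLp 2 v‖ ^ 2 := by
    rcases huv with hu | hv
    · have := norm_pos_iff.mpr hu; positivity
    · have := norm_pos_iff.mpr hv; positivity
  have hbound := neg_le_of_abs_le (abs_dotProduct_mulVec_le_opNorm C u v)
  have hC0 : 0 ≤ opNorm C := norm_nonneg _
  nlinarith [mul_pos (sub_pos.mpr hC) hsum,
    mul_nonneg hC0 (sq_nonneg (‖WithLp.toLp 2 u‖ - ‖WithLp.toLp 2 v‖))]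

lemma fromBlocks_eq_mul_fromBlocks_one_mul_transpose {R m n : Type*} [CommRing R]
    [Fintype m] [Fintype n] [DecidableEq m] [DecidableEq n]
    (A : Matrix m m R) (B : Matrix n n R) (C : Matrix m n R) :
    fromBlocks (A * Aᵀ) (A * C * Bᵀ) (B * Cᵀ * Aᵀ) (B * Bᵀ)
      = fromBlocks A 0 0 B * fromBlocks 1 C Cᵀ 1 * (fromBlocks A 0 0 B)ᵀ := by
  simp [fromBlocks_transpose, fromBlocks_multiply, Matrix.mul_assoc]

lemma posDef_fromBlocks_mul_transpose {R m n : Type*} [CommRing R] [PartialOrder R] [StarRing R]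
    [TrivialStar R] [Fintype m] [Fintype n] [DecidableEq m] [DecidableEq n]
    {A : Matrix m m R} {B : Matrix n n R} {C : Matrix m n R}
    (hA : IsUnit A) (hB : IsUnit B) (hC : (fromBlocks 1 C Cᵀ 1).PosDef) :
    (fromBlocks (A * Aᵀ) (A * C * Bᵀ) (B * Cᵀ * Aᵀ) (B * Bᵀ)).PosDef := by
  have hD : IsUnit (fromBlocks A 0 0 B) := isUnit_fromBlocks_zero₂₁.mpr ⟨hA, hB⟩
  rw [fromBlocks_eq_mul_fromBlocks_one_mul_transpose]
  simpa only [star_eq_conjTranspose, conjTranspose_eq_transpose_of_trivial] using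
    (IsUnit.posDef_star_right_conjugate_iff hD).mpr hC

lemma inv_transpose_mul_self {R n : Type*} [CommRing R] [Fintype n] [DecidableEq n]
    (L : Matrix n n R) :
    (Lᵀ * L)⁻¹ = L⁻¹ * L⁻¹ᵀ := by
  rw [Matrix.mul_inv_rev, transpose_nonsing_inv]

theorem joint_covariance_posDef_general {n1 n2 : ℕ}
    (Lp : Matrix (Fin n1) (Fin n1) ℝ) (Lm : Matrix (Fin n2) (Fin n2) ℝ)
    (hLp : IsUnit Lp) (hLm : IsUnit Lm)
    (Γp : Matrix (Fin n1) (Fin n1) ℝ) (Γm : Matrix (Fin n2) (Fin n2) ℝ)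
    (hΓp : Γp = (Lpᵀ * Lp)⁻¹) (hΓm : Γm = (Lmᵀ * Lm)⁻¹)
    (C : Matrix (Fin n1) (Fin n2) ℝ) (hC : opNorm C < 1) :
    (Matrix.fromBlocks Γp (Lp⁻¹ * C * (Lm⁻¹)ᵀ) (Lm⁻¹ * Cᵀ * (Lp⁻¹)ᵀ) Γm).PosDef := by
  rw [hΓp, hΓm, inv_transpose_mul_self, inv_transpose_mul_self]
  exact posDef_fromBlocks_mul_transpose (isUnit_nonsing_inv_iff.mpr hLp)
    (isUnit_nonsing_inv_iff.mpr hLm) (posDef_fromBlocks_one_of_opNorm_lt_one C hC)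

theorem joint_covariance_posDef {n1 n2 : ℕ}
    (Lp : Matrix (Fin n1) (Fin n1) ℝ) (Lm : Matrix (Fin n2) (Fin n2) ℝ)
    (hLp : IsUnit Lp) (hLm : IsUnit Lm)
    (Γp : Matrix (Fin n1) (Fin n1) ℝ) (Γm : Matrix (Fin n2) (Fin n2) ℝ)
    (hΓp : Γp = (Lpᵀ * Lp)⁻¹) (hΓm : Γm = (Lmᵀ * Lm)⁻¹)
    (hΓppd : Γp.PosDef) (hΓmpd : Γm.PosDef)
    (C : Matrix (Fin n1) (Fin n2) ℝ) (hC : opNorm C < 1) :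
    (Matrix.fromBlocks Γp (Lp⁻¹ * C * (Lm⁻¹)ᵀ) (Lm⁻¹ * Cᵀ * (Lp⁻¹)ᵀ) Γm).PosDef :=
  joint_covariance_posDef_general Lp Lm hLp hLm Γp Γm hΓp hΓm C hC
end

section
/- With V as in the previous context, for fixed (p, m) ∈ ℝ² with p = m ≠ 0, V(p, m, c) → +∞ as c → 1⁻; moreover, for (p, m) fixed, sup_{|c|<1} V(p, m, c) = +∞ whenever p = m ≠ 0 or p = −m ≠ 0 (taking c → 1⁻ or c → −1⁺ respectively). -/
open Filter

/-- The log-prior `V(p, m, c) = -(1/2)(p² - 2cpm + m²)/(1-c²) - (1/2)ln(1-c²)`. -/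
noncomputable def V (p m c : ℝ) : ℝ :=
  -(1 / 2) * ((p ^ 2 - 2 * c * p * m + m ^ 2) / (1 - c ^ 2)) -
    (1 / 2) * Real.log (1 - c ^ 2)

lemma V_eq (p c : ℝ) (hc : c ∈ Set.Ioo (-1 : ℝ) 1) :
    V p p c = -p ^ 2 / (1 + c) - (1 / 2) * Real.log (1 - c ^ 2) := by
  obtain ⟨h1, h2⟩ := hc
  have hne : (1 : ℝ) - c ^ 2 ≠ 0 := by nlinarith
  have hne2 : (1 : ℝ) + c ≠ 0 := by linarith
  unfold V
  field_simp
  ring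

lemma V_tendsto (p : ℝ) :
    Tendsto (fun c => V p p c) (nhdsWithin 1 (Set.Iio 1)) atTop := by
  have hmem : ∀ᶠ c in nhdsWithin (1 : ℝ) (Set.Iio 1), c ∈ Set.Ioo (-1 : ℝ) 1 := by
    filter_upwards [self_mem_nhdsWithin,
      eventually_nhdsWithin_of_eventually_nhds (eventually_gt_nhds (by norm_num : (-1:ℝ) < 1))]
      with c hc hc' using ⟨hc', hc⟩
  have h2 : Tendsto (fun c : ℝ => 1 - c ^ 2) (nhdsWithin 1 (Set.Iio 1))
      (nhdsWithin 0 (Set.Ioi 0)) := by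
    rw [tendsto_nhdsWithin_iff]
    constructor
    · have : Tendsto (fun c : ℝ => 1 - c ^ 2) (nhds 1) (nhds (1 - 1 ^ 2)) := by
        exact (continuous_const.sub (continuous_pow 2)).tendsto 1
      simpa using this.mono_left nhdsWithin_le_nhds
    · filter_upwards [hmem] with c hc
      obtain ⟨h1, h2⟩ := hc
      have : c ^ 2 < 1 := by nlinarith
      simp only [Set.mem_Ioi]
      nlinarith
  have hlog : Tendsto (fun c : ℝ => Real.log (1 - c ^ 2)) (nhdsWithin 1 (Set.Iio 1)) atBot :=
    Real.tendsto_log_nhdsGT_zero.comp h2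
  have hmain : Tendsto (fun c : ℝ => -p ^ 2 / (1 + c) - (1 / 2) * Real.log (1 - c ^ 2))
      (nhdsWithin 1 (Set.Iio 1)) atTop := by
    have hA : Tendsto (fun c : ℝ => -p ^ 2 / (1 + c)) (nhdsWithin 1 (Set.Iio 1))
        (nhds (-p ^ 2 / 2)) := by
      have : Tendsto (fun c : ℝ => -p ^ 2 / (1 + c)) (nhds 1) (nhds (-p ^ 2 / (1 + 1))) :=
        (tendsto_const_nhds.div ((continuous_const.add continuous_id).tendsto 1) (by norm_num))
      simpa [one_add_one_eq_two] using this.mono_left nhdsWithin_le_nhds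
    have hB : Tendsto (fun c : ℝ => -((1 / 2) * Real.log (1 - c ^ 2)))
        (nhdsWithin 1 (Set.Iio 1)) atTop := by
      exact tendsto_neg_atBot_atTop.comp (hlog.const_mul_atBot (by norm_num : (0:ℝ) < 1 / 2))
    simpa [sub_eq_add_neg] using hA.add_atTop hB
  refine hmain.congr' ?_
  filter_upwards [hmem] with c hc
  exact (V_eq p c hc).symm

lemma V_not_bddAbove (p : ℝ) :
    ¬ BddAbove ((fun c => V p p c) '' Set.Ioo (-1 : ℝ) 1) := by
  rintro ⟨B, hB⟩
  have h := V_tendsto p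
  have hmem : ∀ᶠ c in nhdsWithin (1 : ℝ) (Set.Iio 1), c ∈ Set.Ioo (-1 : ℝ) 1 := by
    filter_upwards [self_mem_nhdsWithin,
      eventually_nhdsWithin_of_eventually_nhds (eventually_gt_nhds (by norm_num : (-1:ℝ) < 1))]
      with c hc hc' using ⟨hc', hc⟩
  have hbig : ∀ᶠ c in nhdsWithin (1 : ℝ) (Set.Iio 1), B + 1 ≤ V p p c :=
    h.eventually_ge_atTop (B + 1)
  obtain ⟨c, hc1, hc2⟩ := (hbig.and hmem).exists
  have : V p p c ≤ B := hB (Set.mem_image_of_mem _ hc2)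
  linarith

/-- For `p = m ≠ 0`, `V(p,m,c) → +∞` as `c → 1⁻`; and whenever `p = m ≠ 0` or `p = -m ≠ 0`
the supremum of `V(p,m,·)` over `(-1,1)` is `+∞`, i.e. `V(p,m,·)` is unbounded above there. -/
theorem V_unbounded_above (p m : ℝ) :
    (p = m → p ≠ 0 →
      Tendsto (fun c => V p m c) (nhdsWithin 1 (Set.Iio 1)) atTop) ∧
    ((p = m ∧ p ≠ 0) ∨ (p = -m ∧ p ≠ 0) →
      ¬ BddAbove ((fun c => V p m c) '' Set.Ioo (-1 : ℝ) 1)) := by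
  constructor
  · rintro rfl _
    exact V_tendsto p
  · rintro (⟨rfl, _⟩ | ⟨hpm, _⟩)
    · exact V_not_bddAbove p
    · have hm : m = -p := by linarith [hpm]
      subst hm
      have hsym : ∀ c : ℝ, V p (-p) c = V p p (-c) := by
        intro c; unfold V; ring_nf
      have himg : (fun c => V p (-p) c) '' Set.Ioo (-1 : ℝ) 1 =
          (fun c => V p p c) '' Set.Ioo (-1 : ℝ) 1 := by
        ext x
        simp only [Set.mem_image]
        constructor
        · rintro ⟨c, hc, rfl⟩
          exact ⟨-c, ⟨by linarith [hc.2], by linarith [hc.1]⟩, (hsym c).symm⟩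
        · rintro ⟨c, hc, rfl⟩
          exact ⟨-c, ⟨by linarith [hc.2], by linarith [hc.1]⟩, by rw [hsym]; ring_nf⟩
      rw [himg]
      exact V_not_bddAbove p
end
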